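/- arXiv:math/0607419 — 5 statements merged into one kernel-verified Lean document; each statement's English description precedes it below -/
import Mathlib

section
/- Let u be a nonempty word over alphabet A, and write u = u₁ aⁿ where a is the last letter of u and n is maximal (i.e. u₁ does not end in a). Then the coefficient of u₁ ⊗ aⁿ in the unshuffle coproduct c(u) equals 1. -/
open TensorProduct

/-- The unshuffle coproduct on the monoid algebra of the free monoid (= `K⟨A⟩`):
the unique algebra morphism (for the concatenation product) sending each letter `a`
to `a ⊗ 1 + 1 ⊗ a`. -/
noncomputable def unshuffle (K A : Type*) [CommSemiring K] :
    MonoidAlgebra K (FreeMonoid A) →ₐ[K]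
      MonoidAlgebra K (FreeMonoid A) ⊗[K] MonoidAlgebra K (FreeMonoid A) :=
  MonoidAlgebra.lift K _ (FreeMonoid A)
    (FreeMonoid.lift fun a =>
      (MonoidAlgebra.of K (FreeMonoid A) (FreeMonoid.of a)) ⊗ₜ[K] 1
        + 1 ⊗ₜ[K] (MonoidAlgebra.of K (FreeMonoid A) (FreeMonoid.of a)))

/-- The word `l` viewed as an element of `K⟨A⟩`. -/
noncomputable def wd {K : Type*} {A : Type*} [CommSemiring K] (l : List A) :
    MonoidAlgebra K (FreeMonoid A) :=
  MonoidAlgebra.of K (FreeMonoid A) (FreeMonoid.ofList l)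

/-- `P` is primitive for the unshuffle coproduct: `c(P) = P ⊗ 1 + 1 ⊗ P`. -/
def IsPrimitive {K A : Type*} [CommSemiring K] (P : MonoidAlgebra K (FreeMonoid A)) : Prop :=
  unshuffle K A P = P ⊗ₜ[K] 1 + 1 ⊗ₜ[K] P

/-- Coefficient-extraction on a basis tensor `u ⊗ v` of `K⟨A⟩ ⊗ K⟨A⟩`. -/
noncomputable def coeffT {K A : Type*} [CommSemiring K] (u v : FreeMonoid A) :
    MonoidAlgebra K (FreeMonoid A) ⊗[K] MonoidAlgebra K (FreeMonoid A) →ₗ[K] K :=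
  (TensorProduct.lid K K).toLinearMap ∘ₗ
    TensorProduct.map (Finsupp.lapply u ∘ₗ (MonoidAlgebra.coeffLinearEquiv K).toLinearMap)
      (Finsupp.lapply v ∘ₗ (MonoidAlgebra.coeffLinearEquiv K).toLinearMap)

/-! Peel letters off the right end of the word: since `c(w x) = c(w) (x ⊗ 1 + 1 ⊗ x)`, the
coefficient of `u ⊗ v` in `c(w x)` is that of `u' ⊗ v` in `c(w)` if `u = u' x`, plus that of
`u ⊗ v'` in `c(w)` if `v = v' x`. For `w = u₁ aⁿ` and `u = u₁` the first option never occurs,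
as `u₁` does not end in `a`, so each `a` must go to the right factor and the coefficient equals
that of `u₁ ⊗ 1` in `c(u₁)`, which is `1`. -/

open MonoidAlgebra

section

variable {K A : Type*} [CommSemiring K]

lemma coeffT_tmul (u v : FreeMonoid A) (f g : MonoidAlgebra K (FreeMonoid A)) :
    coeffT u v (f ⊗ₜ[K] g) = f.coeff u * g.coeff v := by
  simp [coeffT]

lemma coeff_ofList_mul_single_of [DecidableEq A] (f : MonoidAlgebra K (FreeMonoid A))
    (u : List A) (x : A) :
    (f * single (FreeMonoid.of x) 1).coeff (FreeMonoid.ofList u) =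
      if u.getLast? = some x then f.coeff (FreeMonoid.ofList u.dropLast) else 0 := by
  split_ifs with hu
  · conv_lhs => rw [← List.dropLast_append_getLast? x hu]
    rw [FreeMonoid.ofList_append, FreeMonoid.ofList_singleton, coeff_mul_single_mul, mul_one]
  · refine coeff_mul_single_of_forall_mul_ne _ _ fun d hd => hu ?_
    rw [← FreeMonoid.toList_ofList u, ← hd, FreeMonoid.toList_mul, FreeMonoid.toList_of,
      List.getLast?_concat]

lemma coeffT_mul_single_of_tmul_one [DecidableEq A]
    (T : MonoidAlgebra K (FreeMonoid A) ⊗[K] MonoidAlgebra K (FreeMonoid A))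
    (u v : List A) (x : A) :
    coeffT (FreeMonoid.ofList u) (FreeMonoid.ofList v) (T * (single (FreeMonoid.of x) 1 ⊗ₜ 1)) =
      if u.getLast? = some x then coeffT (FreeMonoid.ofList u.dropLast) (FreeMonoid.ofList v) T
      else 0 := by
  induction T using TensorProduct.induction_on with
  | zero => simp
  | tmul f g =>
    rw [Algebra.TensorProduct.tmul_mul_tmul, mul_one, coeffT_tmul, coeff_ofList_mul_single_of,
      coeffT_tmul, ite_mul, zero_mul]
  | add S T hS hT => rw [add_mul, map_add, hS, hT, map_add, ite_add_ite, add_zero]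

lemma coeffT_mul_one_tmul_single_of [DecidableEq A]
    (T : MonoidAlgebra K (FreeMonoid A) ⊗[K] MonoidAlgebra K (FreeMonoid A))
    (u v : List A) (x : A) :
    coeffT (FreeMonoid.ofList u) (FreeMonoid.ofList v) (T * (1 ⊗ₜ single (FreeMonoid.of x) 1)) =
      if v.getLast? = some x then coeffT (FreeMonoid.ofList u) (FreeMonoid.ofList v.dropLast) T
      else 0 := by
  induction T using TensorProduct.induction_on with
  | zero => simp
  | tmul f g =>
    rw [Algebra.TensorProduct.tmul_mul_tmul, mul_one, coeffT_tmul, coeff_ofList_mul_single_of,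
      coeffT_tmul, mul_ite, mul_zero]
  | add S T hS hT => rw [add_mul, map_add, hS, hT, map_add, ite_add_ite, add_zero]

lemma unshuffle_wd_concat (l : List A) (x : A) :
    unshuffle K A (wd (l ++ [x])) =
      unshuffle K A (wd l) *
        (single (FreeMonoid.of x) 1 ⊗ₜ 1 + 1 ⊗ₜ single (FreeMonoid.of x) 1) := by
  rw [wd, FreeMonoid.ofList_append, map_mul, map_mul, ← wd, FreeMonoid.ofList_singleton,
    unshuffle, lift_of, FreeMonoid.lift_eval_of, of_apply]

lemma coeffT_unshuffle_wd_concat [DecidableEq A] (l u v : List A) (x : A) :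
    coeffT (FreeMonoid.ofList u) (FreeMonoid.ofList v) (unshuffle K A (wd (l ++ [x]))) =
      (if u.getLast? = some x then
        coeffT (FreeMonoid.ofList u.dropLast) (FreeMonoid.ofList v) (unshuffle K A (wd l))
        else 0) +
      (if v.getLast? = some x then
        coeffT (FreeMonoid.ofList u) (FreeMonoid.ofList v.dropLast) (unshuffle K A (wd l))
        else 0) := by
  rw [unshuffle_wd_concat, mul_add, map_add, coeffT_mul_single_of_tmul_one,
    coeffT_mul_one_tmul_single_of]

lemma coeffT_unshuffle_wd_self_one (l : List A) :
    coeffT (FreeMonoid.ofList l) (FreeMonoid.ofList []) (unshuffle K A (wd l)) = (1 : K) := by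
  classical
  induction l using List.reverseRecOn with
  | nil =>
    rw [wd, FreeMonoid.ofList_nil, map_one, map_one, Algebra.TensorProduct.one_def, coeffT_tmul,
      one_def, coeff_single, Finsupp.single_eq_same, mul_one]
  | append_singleton l x ih =>
    rw [coeffT_unshuffle_wd_concat, if_pos (List.getLast?_concat ..), if_neg (by simp),
      List.dropLast_concat, ih, add_zero]

end

theorem coeff_of_last_letter_block_general {K A : Type*} [CommSemiring K]
    (u₁ : List A) (a : A) (n : ℕ) (hlast : u₁.getLast? ≠ some a) :
    coeffT (K := K) (FreeMonoid.ofList u₁) (FreeMonoid.ofList (List.replicate n a))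
      (unshuffle K A (wd (u₁ ++ List.replicate n a))) = 1 := by
  classical
  induction n with
  | zero => simpa using coeffT_unshuffle_wd_self_one (K := K) u₁
  | succ n ih =>
    rw [List.replicate_succ', ← List.append_assoc, coeffT_unshuffle_wd_concat, if_neg hlast,
      if_pos (by simp), List.dropLast_concat, ih, zero_add]

/-- if `u = u₁ aⁿ` with `n ≥ 1` maximal (i.e. `u₁` does not end in `a`),
then the coefficient of `u₁ ⊗ aⁿ` in `c(u)` is `1`. -/
theorem coeff_of_last_letter_block {K A : Type*} [CommSemiring K]
    (u₁ : List A) (a : A) (n : ℕ) (hn : 0 < n) (hlast : u₁.getLast? ≠ some a) :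
    coeffT (K := K) (FreeMonoid.ofList u₁) (FreeMonoid.ofList (List.replicate n a))
      (unshuffle K A (wd (u₁ ++ List.replicate n a))) = 1 :=
  coeff_of_last_letter_block_general u₁ a n hlast
end

section
/- Let K be a commutative ring of characteristic 0 (or more generally in which no positive integer multiple of 1 is zero). If a word w ∈ A* of length ≥ 2 is primitive for the unshuffle coproduct (c(w) = w⊗1 + 1⊗w), then a contradiction follows; i.e., the only primitive words are the single letters. -/
open TensorProduct

/-! Send every letter to `1` in the left tensor factor and to `X` in the right one. The
composite `K⟨A⟩ → K⟨A⟩ ⊗ K⟨A⟩ → K[X]` sends every letter to `1 + X`, hence a word of length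
`n` to `(1 + X) ^ n`, whereas `w ⊗ 1 + 1 ⊗ w` goes to `1 + X ^ n`. For `n ≥ 2` the
coefficients of `X` are `n` and `0`. -/

noncomputable def letterTo (K A : Type*) {B : Type*} [CommSemiring K] [Semiring B] [Algebra K B]
    (p : B) : MonoidAlgebra K (FreeMonoid A) →ₐ[K] B :=
  MonoidAlgebra.lift K _ (FreeMonoid A) (FreeMonoid.lift fun _ => p)

theorem letterTo_wd {K A B : Type*} [CommSemiring K] [Semiring B] [Algebra K B]
    (p : B) (l : List A) : letterTo K A p (wd l) = p ^ l.length := by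
  simp [letterTo, wd]

theorem productMap_letterTo_comp_unshuffle {K A B : Type*} [CommSemiring K] [CommSemiring B]
    [Algebra K B] (p q : B) :
    (Algebra.TensorProduct.productMap (letterTo K A p) (letterTo K A q)).comp (unshuffle K A) =
      letterTo K A (p + q) := by
  refine MonoidAlgebra.algHom_ext' (FreeMonoid.hom_eq fun a => ?_) (Subsingleton.elim _ _)
  simp [unshuffle, letterTo]

open Polynomial in
theorem Polynomial.one_add_X_pow_ne_one_add_X_pow {R : Type*} [Semiring R] {n : ℕ} (hn : 2 ≤ n)
    (hR : (n : R) ≠ 0) : (1 + X : R[X]) ^ n ≠ 1 + X ^ n := by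
  intro h
  have hX := congrArg (coeff · 1) h
  simp only [coeff_one_add_X_pow, Nat.choose_one_right, coeff_add, coeff_one, coeff_X_pow] at hX
  rw [if_neg one_ne_zero, if_neg (by omega), add_zero] at hX
  exact hR hX

/-- over a ring in which no positive integer multiple of `1` vanishes,
no word of length `≥ 2` is primitive for the unshuffle coproduct. -/
theorem no_primitive_long_words {K A : Type*} [CommRing K]
    (hchar : ∀ n : ℕ, 0 < n → (n : K) ≠ 0)
    (w : List A) (hw : 2 ≤ w.length)
    (hprim : IsPrimitive (wd (K := K) w)) : False := by
  refine Polynomial.one_add_X_pow_ne_one_add_X_pow hw (hchar _ (by omega)) ?_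
  have h := congrArg (Algebra.TensorProduct.productMap
    (letterTo K A (1 : Polynomial K)) (letterTo K A Polynomial.X)) hprim
  rwa [← AlgHom.comp_apply, productMap_letterTo_comp_unshuffle, map_add,
    Algebra.TensorProduct.productMap_apply_tmul, Algebra.TensorProduct.productMap_apply_tmul,
    letterTo_wd, letterTo_wd, letterTo_wd, map_one, map_one, one_pow, mul_one, one_mul] at h
end

section
/- Let p be a prime and work over K = ℤ/pℤ. A word w ∈ A* is primitive for the unshuffle coproduct in K⟨A⟩ if and only if w = a^{p^α} for some letter a and some α ≥ 0. -/
/-!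
A pair of maps `f, g : A → R` into a commutative `K`-algebra gives an algebra map
`K⟨A⟩ ⊗ K⟨A⟩ → R`, `u ⊗ v ↦ f(u) g(v)`, whose composite with `c` evaluates words at `f + g`.
Hence a primitive word `w` satisfies `∏ (f + g)(wᵢ) = ∏ f(wᵢ) + ∏ g(wᵢ)` for all such `f, g`.
Complementary indicator functions of a letter `a ∈ w` show `w = aⁿ`, and `f = X`, `g = 1` in
`K[X]` give `(X + 1)ⁿ = Xⁿ + 1`, so `p` divides every `(n choose k)` with `0 < k < n` and `n` is
a power of `p`. Conversely a letter is primitive, and in characteristic `p` the Frobenius identity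
`(x ⊗ 1 + 1 ⊗ x)^(p^α) = x^(p^α) ⊗ 1 + 1 ⊗ x^(p^α)` keeps `p^α`-th powers of primitives primitive.
-/

open TensorProduct

section

variable {K A : Type*} [CommSemiring K]

noncomputable def evalLetters (K : Type*) {A R : Type*} [CommSemiring K] [CommSemiring R]
    [Algebra K R] (f : A → R) : MonoidAlgebra K (FreeMonoid A) →ₐ[K] R :=
  MonoidAlgebra.lift K R (FreeMonoid A) (FreeMonoid.lift f)

lemma evalLetters_wd {R : Type*} [CommSemiring R] [Algebra K R] (f : A → R) (w : List A) :
    evalLetters K f (wd w) = (w.map f).prod := by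
  rw [evalLetters, wd, MonoidAlgebra.lift_of, FreeMonoid.lift_ofList]

lemma tensorLift_evalLetters_comp_unshuffle {R : Type*} [CommSemiring R] [Algebra K R]
    (f g : A → R) :
    (Algebra.TensorProduct.lift (evalLetters K f) (evalLetters K g) fun _ _ => .all _ _).comp
      (unshuffle K A) = evalLetters K (f + g) := by
  refine MonoidAlgebra.algHom_ext' ?_ (Subsingleton.elim _ _)
  ext a
  simp [unshuffle, evalLetters]

lemma IsPrimitive.evalLetters_add {R : Type*} [CommSemiring R] [Algebra K R]
    {P : MonoidAlgebra K (FreeMonoid A)} (h : IsPrimitive P) (f g : A → R) :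
    evalLetters K (f + g) P = evalLetters K f P + evalLetters K g P := by
  rw [← tensorLift_evalLetters_comp_unshuffle, AlgHom.comp_apply, h]
  simp

lemma IsPrimitive.map_add_prod {R : Type*} [CommSemiring R] [Algebra K R] {w : List A}
    (h : IsPrimitive (wd (K := K) w)) (f g : A → R) :
    (w.map (f + g)).prod = (w.map f).prod + (w.map g).prod := by
  simpa only [evalLetters_wd] using h.evalLetters_add f g

lemma IsPrimitive.ne_nil {K : Type*} [CommRing K] [Nontrivial K] {w : List A}
    (h : IsPrimitive (wd (K := K) w)) : w ≠ [] := by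
  rintro rfl
  have h_one : (1 : K) = 1 + 1 := by simpa using h.map_add_prod (R := K) 0 0
  exact one_ne_zero (left_eq_add.mp h_one)

lemma IsPrimitive.eq_replicate [Nontrivial K] {w : List A} {a : A}
    (h : IsPrimitive (wd (K := K) w)) (ha : a ∈ w) : w = List.replicate w.length a := by
  classical
  refine List.eq_replicate_iff.mpr ⟨rfl, fun b hb => by_contra fun hba => ?_⟩
  set f : A → K := fun x => if x = a then 1 else 0
  set g : A → K := fun x => if x = a then 0 else 1
  have hfg : f + g = 1 := by
    funext x
    by_cases hx : x = a <;> simp [f, g, hx]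
  have hf : (w.map f).prod = 0 := List.prod_eq_zero (List.mem_map.mpr ⟨b, hb, if_neg hba⟩)
  have hg : (w.map g).prod = 0 := List.prod_eq_zero (List.mem_map.mpr ⟨a, ha, if_pos rfl⟩)
  have key := h.map_add_prod f g
  simp [hfg, hf, hg, Pi.one_def] at key

open Polynomial in
lemma IsPrimitive.X_add_one_pow {n : ℕ} {a : A}
    (h : IsPrimitive (wd (K := K) (List.replicate n a))) :
    (X + 1 : K[X]) ^ n = X ^ n + 1 := by
  simpa using h.map_add_prod (R := K[X]) (fun _ => X) 1

open Polynomial in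
lemma eq_pow_multiplicity_of_X_add_one_pow_eq {p n : ℕ} [Fact p.Prime] (hn : 0 < n)
    (h : (X + 1 : (ZMod p)[X]) ^ n = X ^ n + 1) :
    n = p ^ multiplicity p n := by
  refine Choose.eq_pow_multiplicity_of_choose_modEq_zero hn fun i hi => ?_
  obtain ⟨hi0, hin⟩ := Finset.mem_Icc.mp hi
  have h_coeff := congrArg (coeff · i) h
  simp only [coeff_X_add_one_pow, coeff_add, coeff_X_pow, coeff_one, if_neg (by omega : i ≠ n),
    if_neg (by omega : i ≠ 0), add_zero] at h_coeff
  rw [← ZMod.intCast_eq_intCast_iff]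
  exact_mod_cast h_coeff

lemma wd_replicate (n : ℕ) (a : A) :
    wd (K := K) (List.replicate n a) =
      MonoidAlgebra.of K (FreeMonoid A) (FreeMonoid.of a) ^ n := by
  induction n with
  | zero => simp [wd, MonoidAlgebra.one_def]
  | succ n ih =>
    rw [List.replicate_succ', wd, FreeMonoid.ofList_append, map_mul, ← wd, ih, pow_succ]
    rfl

lemma isPrimitive_of (a : A) :
    IsPrimitive (MonoidAlgebra.of K (FreeMonoid A) (FreeMonoid.of a)) := by
  simp [IsPrimitive, unshuffle]

lemma IsPrimitive.pow_prime_pow {p : ℕ} (hp : p.Prime) [CharP K p]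
    {P : MonoidAlgebra K (FreeMonoid A)} (h : IsPrimitive P) (n : ℕ) :
    IsPrimitive (P ^ p ^ n) := by
  have hcomm : Commute (P ⊗ₜ[K] (1 : MonoidAlgebra K (FreeMonoid A))) (1 ⊗ₜ[K] P) := by
    simp [Commute, SemiconjBy]
  obtain ⟨r, hr⟩ := hcomm.exists_add_pow_prime_pow_eq hp n
  have hp0 : (p : MonoidAlgebra K (FreeMonoid A) ⊗[K] MonoidAlgebra K (FreeMonoid A)) = 0 := by
    rw [← map_natCast (algebraMap K _), CharP.cast_eq_zero, map_zero]
  rw [IsPrimitive, map_pow, h, hr, hp0]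
  simp only [zero_mul, add_zero, Algebra.TensorProduct.tmul_pow, one_pow]

end

/-- over `ℤ/pℤ` (`p` prime), a word is primitive for the unshuffle coproduct
iff it is `a^(p^α)` for some letter `a` and some `α ≥ 0`. -/
theorem primitive_word_iff_p_power {A : Type*} (p : ℕ) (hp : p.Prime) (w : List A) :
    IsPrimitive (wd (K := ZMod p) w) ↔
      ∃ (a : A) (α : ℕ), w = List.replicate (p ^ α) a := by
  have : Fact p.Prime := ⟨hp⟩
  constructor
  · intro h
    obtain ⟨a, ha⟩ := List.exists_mem_of_ne_nil w h.ne_nil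
    obtain ⟨n, rfl⟩ : ∃ n, w = List.replicate n a := ⟨_, h.eq_replicate ha⟩
    have hn : 0 < n := Nat.pos_of_ne_zero (List.mem_replicate.mp ha).1
    have hn_pow := eq_pow_multiplicity_of_X_add_one_pow_eq hn h.X_add_one_pow
    exact ⟨a, _, congrArg (List.replicate · a) hn_pow⟩
  · rintro ⟨a, α, rfl⟩
    rw [wd_replicate]
    exact (isPrimitive_of a).pow_prime_pow hp α
end

section
/- Let K be a commutative ring of prime characteristic p and q₁, q₂ positive integers not divisible by p. If S, T ∈ 1 + M_K (noncommutative formal power series with constant term 1) satisfy S^{q₁} T^{q₂} = T^{q₂} S^{q₁}, then S T = T S. -/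
/-- The Cauchy (concatenation) product of noncommutative formal power series,
viewed as functions `A* → K`: `(f·g)(w) = Σ_{uv = w} f(u) g(v)` (a finite sum). -/
noncomputable def conv {K A : Type*} [CommRing K] (f g : FreeMonoid A → K) :
    FreeMonoid A → K :=
  fun w => ∑ᶠ (p : FreeMonoid A × FreeMonoid A) (_ : p.1 * p.2 = w), f p.1 * g p.2

/-- The unit series `1` (the characteristic function of the empty word). -/
noncomputable def convOne {K A : Type*} [CommRing K] : FreeMonoid A → K :=
  open scoped Classical in
  fun w => if w = 1 then 1 else 0

/-- `q`-th power for the Cauchy product. -/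
noncomputable def convPow {K A : Type*} [CommRing K] (f : FreeMonoid A → K) : ℕ → FreeMonoid A → K
  | 0 => convOne
  | n + 1 => conv f (convPow f n)

open scoped Classical

section Dev
variable {K A : Type*} [CommRing K]

open scoped Classical

/-- All factorizations of a word into two parts. -/
noncomputable def splitsF (w : FreeMonoid A) : Finset (FreeMonoid A × FreeMonoid A) :=
  (Finset.range (w.toList.length + 1)).image
    (fun i => (FreeMonoid.ofList (w.toList.take i), FreeMonoid.ofList (w.toList.drop i)))

lemma mem_splitsF {w : FreeMonoid A} {p : FreeMonoid A × FreeMonoid A} :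
    p ∈ splitsF w ↔ p.1 * p.2 = w := by
  constructor
  · rintro hp
    simp only [splitsF, Finset.mem_image, Finset.mem_range] at hp
    obtain ⟨i, _, rfl⟩ := hp
    apply FreeMonoid.toList.injective
    simp [List.take_append_drop]
  · intro hp
    simp only [splitsF, Finset.mem_image, Finset.mem_range]
    refine ⟨p.1.toList.length, ?_, ?_⟩
    · have := congrArg (fun u => u.toList.length) hp
      simp only [FreeMonoid.toList_mul, List.length_append] at this
      omega
    · have := congrArg FreeMonoid.toList hp
      simp only [FreeMonoid.toList_mul] at this
      have h1 : w.toList.take p.1.toList.length = p.1.toList := by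
        rw [← this, List.take_left]
      have h2 : w.toList.drop p.1.toList.length = p.2.toList := by
        rw [← this, List.drop_left]
      ext <;> simp [h1, h2]

lemma conv_eq (f g : FreeMonoid A → K) (w : FreeMonoid A) :
    conv f g w = ∑ p ∈ splitsF w, f p.1 * g p.2 := by
  rw [conv, ← finsum_mem_coe_finset]
  apply finsum_congr
  intro p
  rcases em (p.1 * p.2 = w) with hp | hp
  · rw [finsum_eq_if, if_pos hp]
    simp [Finset.mem_coe, mem_splitsF, hp]
  · rw [finsum_eq_if, if_neg hp]
    simp [Finset.mem_coe, mem_splitsF, hp]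

end Dev

section Dev2
variable {K A : Type*} [CommRing K]

lemma one_mem_splitsF (w : FreeMonoid A) : ((1 : FreeMonoid A), w) ∈ splitsF w :=
  mem_splitsF.2 (one_mul w)

lemma mem_splitsF_one (w : FreeMonoid A) : (w, (1 : FreeMonoid A)) ∈ splitsF w :=
  mem_splitsF.2 (mul_one w)

lemma convOne_one : convOne (1 : FreeMonoid A) = (1 : K) := by simp [convOne]

lemma convOne_ne {w : FreeMonoid A} (h : w ≠ 1) : convOne w = (0 : K) := by simp [convOne, h]

lemma conv_assoc (f g h : FreeMonoid A → K) : conv (conv f g) h = conv f (conv g h) := by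
  funext w
  simp only [conv_eq, Finset.sum_mul, Finset.mul_sum]
  rw [Finset.sum_sigma' (splitsF w) (fun p => splitsF p.1),
    Finset.sum_sigma' (splitsF w) (fun p => splitsF p.2)]
  refine Finset.sum_bij' (fun x _ => ⟨(x.2.1, x.2.2 * x.1.2), (x.2.2, x.1.2)⟩)
    (fun y _ => ⟨(y.1.1 * y.2.1, y.2.2), (y.1.1, y.2.1)⟩) ?_ ?_ ?_ ?_ ?_
  · rintro ⟨⟨a, b⟩, ⟨c, d⟩⟩ hx
    rw [Finset.mem_sigma] at hx ⊢
    obtain ⟨h1, h2⟩ := hx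
    rw [mem_splitsF] at h1 h2
    simp only at *
    exact ⟨mem_splitsF.2 (by rw [← mul_assoc, h2, h1]), mem_splitsF.2 rfl⟩
  · rintro ⟨⟨c, e⟩, ⟨d, b⟩⟩ hy
    rw [Finset.mem_sigma] at hy ⊢
    obtain ⟨h1, h2⟩ := hy
    rw [mem_splitsF] at h1 h2
    simp only at *
    exact ⟨mem_splitsF.2 (by rw [mul_assoc, h2, h1]), mem_splitsF.2 rfl⟩
  · rintro ⟨⟨a, b⟩, ⟨c, d⟩⟩ hx
    rw [Finset.mem_sigma] at hx
    obtain ⟨h1, h2⟩ := hx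
    rw [mem_splitsF] at h1 h2
    simp only at *
    simp [h2]
  · rintro ⟨⟨c, e⟩, ⟨d, b⟩⟩ hy
    rw [Finset.mem_sigma] at hy
    obtain ⟨h1, h2⟩ := hy
    rw [mem_splitsF] at h1 h2
    simp only at *
    simp [h2]
  · rintro ⟨⟨a, b⟩, ⟨c, d⟩⟩ _
    simp [mul_assoc]

/-- The ring of noncommutative power series (type synonym). -/
structure Ser (K A : Type*) [CommRing K] where toFun : FreeMonoid A → K

namespace Ser

@[ext] lemma ext {f g : Ser K A} (h : ∀ w, f.toFun w = g.toFun w) : f = g := by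
  cases f; cases g; simp only [mk.injEq]; funext w; exact h w

instance : Zero (Ser K A) := ⟨⟨fun _ => 0⟩⟩
instance : Add (Ser K A) := ⟨fun f g => ⟨fun w => f.toFun w + g.toFun w⟩⟩
instance : Neg (Ser K A) := ⟨fun f => ⟨fun w => -f.toFun w⟩⟩
noncomputable instance : One (Ser K A) := ⟨⟨convOne⟩⟩
noncomputable instance : Mul (Ser K A) := ⟨fun f g => ⟨conv f.toFun g.toFun⟩⟩

@[simp] lemma zero_apply (w : FreeMonoid A) : (0 : Ser K A).toFun w = 0 := rfl
@[simp] lemma add_apply (f g : Ser K A) (w : FreeMonoid A) :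
    (f + g).toFun w = f.toFun w + g.toFun w := rfl
@[simp] lemma neg_apply (f : Ser K A) (w : FreeMonoid A) : (-f).toFun w = -f.toFun w := rfl
@[simp] lemma one_apply (w : FreeMonoid A) : (1 : Ser K A).toFun w = convOne w := rfl
lemma mul_toFun (f g : Ser K A) : (f * g).toFun = conv f.toFun g.toFun := rfl
lemma mul_apply (f g : Ser K A) (w : FreeMonoid A) :
    (f * g).toFun w = ∑ p ∈ splitsF w, f.toFun p.1 * g.toFun p.2 := conv_eq _ _ w

lemma one_mul' (f : Ser K A) : 1 * f = f := by
  ext w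
  rw [mul_apply]
  rw [Finset.sum_eq_single ((1 : FreeMonoid A), w)]
  · simp [convOne_one]
  · rintro ⟨a, b⟩ hab hne
    rw [mem_splitsF] at hab
    simp only at *
    have ha : a ≠ 1 := by
      rintro rfl
      rw [one_mul] at hab
      exact hne (by rw [hab])
    simp [convOne_ne ha]
  · intro hmem
    exact absurd (one_mem_splitsF w) hmem

lemma mul_one' (f : Ser K A) : f * 1 = f := by
  ext w
  rw [mul_apply]
  rw [Finset.sum_eq_single (w, (1 : FreeMonoid A))]
  · simp [convOne_one]
  · rintro ⟨a, b⟩ hab hne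
    rw [mem_splitsF] at hab
    simp only at *
    have hb : b ≠ 1 := by
      rintro rfl
      rw [mul_one] at hab
      exact hne (by rw [hab])
    simp [convOne_ne hb]
  · intro hmem
    exact absurd (mem_splitsF_one w) hmem

noncomputable instance : Ring (Ser K A) where
  add_assoc f g h := by ext w; simp [add_assoc]
  zero_add f := by ext w; simp
  add_zero f := by ext w; simp
  add_comm f g := by ext w; simp [add_comm]
  neg_add_cancel f := by ext w; simp
  nsmul := nsmulRec
  zsmul := zsmulRec
  mul_assoc f g h := by
    refine ext (fun w => ?_)
    have := congrFun (conv_assoc f.toFun g.toFun h.toFun) w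
    simpa [mul_toFun] using this
  one_mul := one_mul'
  mul_one := mul_one'
  left_distrib f g h := by
    ext w
    simp [mul_apply, mul_add, Finset.sum_add_distrib]
  right_distrib f g h := by
    ext w
    simp [mul_apply, add_mul, Finset.sum_add_distrib]
  zero_mul f := by ext w; simp [mul_apply]
  mul_zero f := by ext w; simp [mul_apply]

end Ser
end Dev2

section Dev3
variable {K A : Type*} [CommRing K]

lemma eq_one_one_of_mul_eq_one {p : FreeMonoid A × FreeMonoid A} (h : p.1 * p.2 = 1) :
    p = (1, 1) := by
  have := congrArg FreeMonoid.toList h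
  simp only [FreeMonoid.toList_mul, FreeMonoid.toList_one, List.append_eq_nil_iff] at this
  obtain ⟨h1, h2⟩ := this
  have e1 : p.1 = 1 := FreeMonoid.toList.injective (by simp [h1])
  have e2 : p.2 = 1 := FreeMonoid.toList.injective (by simp [h2])
  ext <;> simp [e1, e2]

namespace Ser

lemma mul_apply_one (f g : Ser K A) :
    (f * g).toFun 1 = f.toFun 1 * g.toFun 1 := by
  rw [mul_apply, Finset.sum_eq_single ((1 : FreeMonoid A), (1 : FreeMonoid A))]
  · rintro ⟨a, b⟩ hab hne
    exact absurd (eq_one_one_of_mul_eq_one (mem_splitsF.1 hab)) hne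
  · intro hmem
    exact absurd (mem_splitsF.2 (one_mul 1)) hmem

/-- the constant-term ring hom -/
noncomputable def ct : Ser K A →+* K where
  toFun f := f.toFun 1
  map_one' := convOne_one
  map_mul' f g := mul_apply_one f g
  map_zero' := rfl
  map_add' f g := rfl

lemma convPow_eq (f : FreeMonoid A → K) (n : ℕ) :
    convPow f n = ((Ser.mk f) ^ n).toFun := by
  induction n with
  | zero => rw [pow_zero]; rfl
  | succ n ih => rw [convPow, ih, pow_succ' (Ser.mk f) n]; rfl

/-- agree up to length m is preserved by multiplication -/
lemma mul_agree {m : ℕ} {f f' g g' : Ser K A}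
    (hf : ∀ u : FreeMonoid A, u.toList.length ≤ m → f.toFun u = f'.toFun u)
    (hg : ∀ u : FreeMonoid A, u.toList.length ≤ m → g.toFun u = g'.toFun u) :
    ∀ w : FreeMonoid A, w.toList.length ≤ m → (f * g).toFun w = (f' * g').toFun w := by
  intro w hw
  rw [mul_apply, mul_apply]
  refine Finset.sum_congr rfl ?_
  rintro ⟨a, b⟩ hab
  have hab' := mem_splitsF.1 hab
  have hlen : a.toList.length + b.toList.length = w.toList.length := by
    have := congrArg (fun u => (FreeMonoid.toList u).length) hab'
    simpa using this
  simp only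
  rw [hf a (by omega), hg b (by omega)]

lemma pow_agree {m : ℕ} {f g : Ser K A} (q : ℕ)
    (h : ∀ u : FreeMonoid A, u.toList.length ≤ m → f.toFun u = g.toFun u) :
    ∀ w : FreeMonoid A, w.toList.length ≤ m → (f ^ q).toFun w = (g ^ q).toFun w := by
  induction q with
  | zero => intro w hw; rw [pow_zero, pow_zero]
  | succ q ih =>
      rw [pow_succ, pow_succ]
      exact mul_agree ih h

end Ser
end Dev3

section Dev4
variable {K A : Type*} [CommRing K]

lemma FreeMonoid.eq_one_of_len {a : FreeMonoid A} (h : a.toList.length = 0) : a = 1 := by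
  apply FreeMonoid.toList.injective
  simpa [List.length_eq_zero_iff] using h

lemma one_le_len {a : FreeMonoid A} (h : a ≠ 1) : 1 ≤ a.toList.length := by
  rcases Nat.eq_zero_or_pos a.toList.length with h0 | h1
  · exact absurd (FreeMonoid.eq_one_of_len h0) h
  · exact h1

lemma splits_len {w : FreeMonoid A} {p : FreeMonoid A × FreeMonoid A} (h : p ∈ splitsF w) :
    p.1.toList.length + p.2.toList.length = w.toList.length := by
  have := congrArg (fun u => (FreeMonoid.toList u).length) (mem_splitsF.1 h)
  simpa using this

namespace Ser

@[simp] lemma sub_apply (f g : Ser K A) (w : FreeMonoid A) :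
    (f - g).toFun w = f.toFun w - g.toFun w := by
  rw [sub_eq_add_neg, sub_eq_add_neg]; simp

/-- evaluation at a word, as an additive hom -/
noncomputable def evalAdd (w : FreeMonoid A) : Ser K A →+ K where
  toFun f := f.toFun w
  map_zero' := rfl
  map_add' _ _ := rfl

lemma sum_apply {ι : Type*} (s : Finset ι) (F : ι → Ser K A) (w : FreeMonoid A) :
    (∑ k ∈ s, F k).toFun w = ∑ k ∈ s, (F k).toFun w :=
  map_sum (evalAdd w) F s

lemma pow_eval_zero {N : Ser K A} (hN : N.toFun 1 = 0) :
    ∀ (k : ℕ) (w : FreeMonoid A), w.toList.length < k → (N ^ k).toFun w = 0 := by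
  intro k
  induction k with
  | zero => intro w hw; omega
  | succ k ih =>
      intro w hw
      rw [pow_succ' N k, mul_apply]
      refine Finset.sum_eq_zero ?_
      rintro ⟨a, b⟩ hab
      have hlen := splits_len hab
      simp only at *
      rcases em (a = 1) with rfl | ha
      · rw [hN, zero_mul]
      · have : b.toList.length < k := by have := one_le_len ha; omega
        rw [ih b this, mul_zero]

/-- geometric-series inverse -/
noncomputable def ginv (f : Ser K A) : Ser K A :=
  ⟨fun w => (∑ k ∈ Finset.range (w.toList.length + 1), (1 - f) ^ k).toFun w⟩

lemma ginv_apply_le {f : Ser K A} (hf : f.toFun 1 = 1) {m : ℕ} {w : FreeMonoid A}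
    (h : w.toList.length ≤ m) :
    (ginv f).toFun w = (∑ k ∈ Finset.range (m + 1), (1 - f) ^ k).toFun w := by
  have hN : (1 - f).toFun 1 = 0 := by simp [hf, convOne_one]
  show (∑ k ∈ Finset.range (w.toList.length + 1), (1 - f) ^ k).toFun w = _
  rw [sum_apply, sum_apply]
  refine Finset.sum_subset (Finset.range_subset_range.2 (by omega)) ?_
  intro k hk hk'
  simp only [Finset.mem_range] at hk hk'
  exact pow_eval_zero hN k w (by omega)

lemma mul_ginv {f : Ser K A} (hf : f.toFun 1 = 1) : f * ginv f = 1 := by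
  have hN : (1 - f).toFun 1 = 0 := by simp [hf, convOne_one]
  ext w
  set m := w.toList.length with hm
  set Q : Ser K A := ∑ k ∈ Finset.range (m + 1), (1 - f) ^ k with hQ
  have step : (f * ginv f).toFun w = (f * Q).toFun w := by
    rw [mul_apply, mul_apply]
    refine Finset.sum_congr rfl ?_
    rintro ⟨a, b⟩ hab
    have hlen : a.toList.length + b.toList.length = w.toList.length := splits_len hab
    simp only
    rw [ginv_apply_le hf (m := m) (by omega)]
  have key : f * Q = 1 - (1 - f) ^ (m + 1) := by
    have := mul_geom_sum (1 - f) (m + 1)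
    have h2 : ((1 - f) - 1) * Q = (1 - f) ^ (m + 1) - 1 := this
    have h3 : (1 - f) - 1 = -f := by abel
    rw [h3] at h2
    have := congrArg (fun x => -x) h2
    simp only [neg_mul, neg_neg, neg_sub] at this ⊢
    rw [← this]
  rw [step, key]
  have : ((1 - f) ^ (m + 1)).toFun w = 0 := pow_eval_zero hN (m + 1) w (by omega)
  simp [this]

lemma ginv_mul {f : Ser K A} (hf : f.toFun 1 = 1) : ginv f * f = 1 := by
  have hN : (1 - f).toFun 1 = 0 := by simp [hf, convOne_one]
  ext w
  set m := w.toList.length with hm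
  set Q : Ser K A := ∑ k ∈ Finset.range (m + 1), (1 - f) ^ k with hQ
  have step : (ginv f * f).toFun w = (Q * f).toFun w := by
    rw [mul_apply, mul_apply]
    refine Finset.sum_congr rfl ?_
    rintro ⟨a, b⟩ hab
    have hlen : a.toList.length + b.toList.length = w.toList.length := splits_len hab
    simp only
    rw [ginv_apply_le hf (m := m) (by omega)]
  have key : Q * f = 1 - (1 - f) ^ (m + 1) := by
    have h2 : Q * ((1 - f) - 1) = (1 - f) ^ (m + 1) - 1 := geom_sum_mul (1 - f) (m + 1)
    have h3 : (1 - f) - 1 = -f := by abel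
    rw [h3] at h2
    have := congrArg (fun x => -x) h2
    simp only [mul_neg, neg_neg, neg_sub] at this ⊢
    rw [← this]
  rw [step, key]
  have : ((1 - f) ^ (m + 1)).toFun w = 0 := pow_eval_zero hN (m + 1) w (by omega)
  simp [this]

/-- the unit attached to a series with constant term 1 -/
noncomputable def unit (f : Ser K A) (hf : f.toFun 1 = 1) : (Ser K A)ˣ :=
  ⟨f, ginv f, mul_ginv hf, ginv_mul hf⟩

end Ser
end Dev4

section Dev5
variable {K A : Type*} [CommRing K]

namespace Ser

lemma pow_apply_one (X : Ser K A) (q : ℕ) (hX : X.toFun 1 = 1) :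
    (X ^ q).toFun 1 = 1 := by
  have : ct (X ^ q) = 1 := by rw [map_pow]; show (X.toFun 1) ^ q = 1; rw [hX, one_pow]
  exact this

lemma pow_sub_eval {n : ℕ} (hn : 0 < n) {X Y : Ser K A} (hX : X.toFun 1 = 1)
    (hY : Y.toFun 1 = 1) (hagree : ∀ u : FreeMonoid A, u.toList.length < n →
      X.toFun u = Y.toFun u) (q : ℕ) :
    ∀ w : FreeMonoid A, w.toList.length = n →
      (X ^ q).toFun w - (Y ^ q).toFun w = (q : K) * (X.toFun w - Y.toFun w) := by
  induction q with
  | zero => intro w hw; rw [pow_zero, pow_zero]; simp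
  | succ q ih =>
      intro w hw
      have hw1 : w ≠ 1 := by
        intro hww; rw [hww] at hw; simp [FreeMonoid.toList_one] at hw; omega
      have hmem1 : ((1 : FreeMonoid A), w) ∈ splitsF w := one_mem_splitsF w
      have hne : (w, (1 : FreeMonoid A)) ≠ ((1 : FreeMonoid A), w) := by
        intro hc
        exact hw1 (congrArg Prod.fst hc)
      have hmem2 : (w, (1 : FreeMonoid A)) ∈ (splitsF w).erase (1, w) :=
        Finset.mem_erase.2 ⟨hne, mem_splitsF_one w⟩
      have expand : ∀ Z : Ser K A, Z.toFun 1 = 1 →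
          (Z ^ (q + 1)).toFun w = (Z ^ q).toFun w + Z.toFun w
            + ∑ p ∈ ((splitsF w).erase (1, w)).erase (w, 1),
                Z.toFun p.1 * (Z ^ q).toFun p.2 := by
        intro Z hZ
        rw [pow_succ' Z q, mul_apply]
        rw [← Finset.add_sum_erase _ _ hmem1, ← Finset.add_sum_erase _ _ hmem2]
        simp only [hZ, one_mul, pow_apply_one Z q hZ, mul_one]
        ring
      rw [expand X hX, expand Y hY]
      have hsum : ∑ p ∈ ((splitsF w).erase (1, w)).erase (w, 1),
            X.toFun p.1 * (X ^ q).toFun p.2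
          = ∑ p ∈ ((splitsF w).erase (1, w)).erase (w, 1),
            Y.toFun p.1 * (Y ^ q).toFun p.2 := by
        refine Finset.sum_congr rfl ?_
        rintro ⟨a, b⟩ hab
        have h1 := Finset.mem_of_mem_erase hab
        have hne1 : ((a, b) : FreeMonoid A × FreeMonoid A) ≠ (w, 1) :=
          Finset.ne_of_mem_erase hab
        have hne2 : ((a, b) : FreeMonoid A × FreeMonoid A) ≠ (1, w) :=
          Finset.ne_of_mem_erase h1
        have h2 := Finset.mem_of_mem_erase h1
        have hablen : a.toList.length + b.toList.length = w.toList.length := splits_len h2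
        have hab' : a * b = w := mem_splitsF.1 h2
        have ha : a ≠ 1 := by
          rintro rfl
          rw [one_mul] at hab'
          exact hne2 (by rw [hab'])
        have hb : b ≠ 1 := by
          rintro rfl
          rw [mul_one] at hab'
          exact hne1 (by rw [hab'])
        have hla := one_le_len ha
        have hlb := one_le_len hb
        simp only
        rw [hagree a (by omega)]
        congr 1
        refine pow_agree (m := n - 1) q (fun u hu => hagree u (by omega)) b (by omega)
      rw [hsum]
      have ihw := ih w hw
      push_cast
      linear_combination ihw
  
lemma pow_inj {q : ℕ} (hqK : IsUnit ((q : K))) {X Y : Ser K A} (hX : X.toFun 1 = 1)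
    (hY : Y.toFun 1 = 1) (h : X ^ q = Y ^ q) : X = Y := by
  suffices H : ∀ (n : ℕ) (w : FreeMonoid A), w.toList.length = n → X.toFun w = Y.toFun w by
    exact ext fun w => H _ w rfl
  intro n
  induction n using Nat.strong_induction_on with
  | _ n ih =>
    intro w hw
    rcases Nat.eq_zero_or_pos n with rfl | hn
    · have : w = 1 := FreeMonoid.eq_one_of_len hw
      rw [this, hX, hY]
    · have hagree : ∀ u : FreeMonoid A, u.toList.length < n → X.toFun u = Y.toFun u :=
        fun u hu => ih u.toList.length (by omega) u rfl
      have hd := pow_sub_eval hn hX hY hagree q w hw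
      rw [h, sub_self] at hd
      have := (hqK.mul_right_eq_zero).1 hd.symm
      exact sub_eq_zero.1 this

end Ser
end Dev5

section Dev6
variable {K A : Type*} [CommRing K]

namespace Ser

lemma ct_apply (f : Ser K A) : ct f = f.toFun 1 := rfl

lemma commute_key {q : ℕ} (hq : IsUnit ((q : K))) (a b : (Ser K A)ˣ)
    (ha : ct (a : Ser K A) = 1) (hb : ct (b : Ser K A) = 1)
    (hcomm : a ^ q * b = b * a ^ q) : a * b = b * a := by
  have hbinv : ct ((b⁻¹ : (Ser K A)ˣ) : Ser K A) = 1 := by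
    have h1 : ct ((b : Ser K A) * ((b⁻¹ : (Ser K A)ˣ) : Ser K A)) = 1 := by
      rw [← Units.val_mul, mul_inv_cancel]
      simp
    rw [map_mul, hb, one_mul] at h1
    exact h1
  have hconj : (b⁻¹ * a * b) ^ q = a ^ q := by
    have h2 : (b⁻¹ * a * b⁻¹⁻¹) ^ q = b⁻¹ * a ^ q * b⁻¹⁻¹ := conj_pow
    rw [inv_inv] at h2
    rw [h2, mul_assoc, hcomm, ← mul_assoc, inv_mul_cancel, one_mul]
  have hctconj : ct ((b⁻¹ * a * b : (Ser K A)ˣ) : Ser K A) = 1 := by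
    rw [Units.val_mul, Units.val_mul, map_mul, map_mul, hbinv, ha, hb]
    ring
  have hser : ((b⁻¹ * a * b : (Ser K A)ˣ) : Ser K A) ^ q = (a : Ser K A) ^ q := by
    rw [← Units.val_pow_eq_pow_val, ← Units.val_pow_eq_pow_val, hconj]
  have := pow_inj hq (X := ((b⁻¹ * a * b : (Ser K A)ˣ) : Ser K A)) (Y := (a : Ser K A))
    hctconj ha hser
  have huu : b⁻¹ * a * b = a := Units.ext this
  calc a * b = b * (b⁻¹ * a * b) := by rw [← mul_assoc, ← mul_assoc, mul_inv_cancel, one_mul]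
    _ = b * a := by rw [huu]

end Ser
end Dev6


/-- over a commutative ring of prime characteristic `p`, if `p ∤ q₁, q₂` and
`S^{q₁} T^{q₂} = T^{q₂} S^{q₁}` for series with constant term `1`, then `S T = T S`. -/
theorem commute_of_pow_commute {K A : Type*} [CommRing K] (p : ℕ) (hp : p.Prime) [CharP K p]
    (q₁ q₂ : ℕ) (hq₁ : 0 < q₁) (hq₂ : 0 < q₂) (hpq₁ : ¬ p ∣ q₁) (hpq₂ : ¬ p ∣ q₂)
    (S T : FreeMonoid A → K) (hS : S 1 = 1) (hT : T 1 = 1)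
    (h : conv (convPow S q₁) (convPow T q₂) = conv (convPow T q₂) (convPow S q₁)) :
    conv S T = conv T S := by
  haveI := Fact.mk hp
  haveI : NeZero p := ⟨hp.ne_zero⟩
  have hqU : ∀ q : ℕ, ¬ p ∣ q → IsUnit ((q : K)) := by
    intro q hq
    have h1 : ((q : ZMod p)) ≠ 0 := by
      rw [Ne, ZMod.natCast_eq_zero_iff]
      exact hq
    have h2 : IsUnit ((q : ZMod p)) := isUnit_iff_ne_zero.2 h1
    have h3 := h2.map (ZMod.castHom (dvd_refl p) K)
    simpa using h3
  set Sf : Ser K A := ⟨S⟩ with hSf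
  set Tf : Ser K A := ⟨T⟩ with hTf
  have hS1 : Sf.toFun 1 = 1 := hS
  have hT1 : Tf.toFun 1 = 1 := hT
  have hmain : Sf ^ q₁ * Tf ^ q₂ = Tf ^ q₂ * Sf ^ q₁ := by
    apply Ser.ext
    intro w
    have hw := congrFun h w
    rw [Ser.convPow_eq S q₁, Ser.convPow_eq T q₂] at hw
    rw [Ser.mul_toFun, Ser.mul_toFun]
    exact hw
  set uS : (Ser K A)ˣ := Ser.unit Sf hS1 with huS
  set uT : (Ser K A)ˣ := Ser.unit Tf hT1 with huT
  have huSv : (uS : Ser K A) = Sf := rfl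
  have huTv : (uT : Ser K A) = Tf := rfl
  have hctS : Ser.ct (uS : Ser K A) = 1 := hS1
  have hctT : Ser.ct (uT : Ser K A) = 1 := hT1
  have hctTq : Ser.ct ((uT ^ q₂ : (Ser K A)ˣ) : Ser K A) = 1 := by
    rw [Units.val_pow_eq_pow_val, map_pow, hctT, one_pow]
  have hu : uS ^ q₁ * (uT ^ q₂) = (uT ^ q₂) * uS ^ q₁ := by
    apply Units.ext
    rw [Units.val_mul, Units.val_mul, Units.val_pow_eq_pow_val, Units.val_pow_eq_pow_val,
      huSv, huTv]
    exact hmain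
  have step1 : uS * (uT ^ q₂) = (uT ^ q₂) * uS :=
    Ser.commute_key (hqU q₁ hpq₁) uS (uT ^ q₂) hctS hctTq hu
  have step2 : uT * uS = uS * uT :=
    Ser.commute_key (hqU q₂ hpq₂) uT uS hctT hctS step1.symm
  have hfin : Tf * Sf = Sf * Tf := by
    have := congrArg Units.val step2
    rwa [Units.val_mul, Units.val_mul, huSv, huTv] at this
  have := congrArg Ser.toFun hfin
  rw [Ser.mul_toFun, Ser.mul_toFun] at this
  exact this.symm
end

section
/- Over the boolean semiring 𝔹 = ({0,1}, max, min), the congruence on A* generated by the single relation a ≡ 1 (erasing a letter a) is 𝔹-shuffle compatible: the unshuffle coproduct c on 𝔹⟨A⟩ descends to the quotient 𝔹[A*/≡]. However, over any semiring K with 1 + 1 ≠ 1, the congruence a ≡ 1 is not K-shuffle compatible. -/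
/-- The boolean semiring `𝔹 = ({0,1}, max, min)`, realized as `Bool` with `+ = or`
(max) and `* = and` (min). -/
instance boolCommSemiring : CommSemiring Bool where
  add := or
  zero := false
  add_assoc := by decide
  zero_add := by decide
  add_zero := by decide
  add_comm := by decide
  nsmul := fun n b => if n = 0 then false else b
  nsmul_zero := by intro b; rfl
  nsmul_succ := by
    intro n b
    show (if n + 1 = 0 then false else b) = ((if n = 0 then false else b) || b)
    cases b <;> by_cases h : n = 0 <;> simp [h]
  natCast := fun n => if n = 0 then false else true
  natCast_zero := rfl
  natCast_succ := by intro n; cases n <;> simp [Nat.succ_ne_zero] <;> rfl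
  mul := and
  one := true
  mul_assoc := by decide
  one_mul := by decide
  mul_one := by decide
  left_distrib := by decide
  right_distrib := by decide
  zero_mul := by decide
  mul_zero := by decide
  mul_comm := by decide

open TensorProduct

/-- The natural algebra morphism `K⟨A⟩ → K[A*/≡]` induced by a monoid congruence. -/
noncomputable def natHom (K : Type*) {A : Type*} [CommSemiring K] (c : Con (FreeMonoid A)) :
    MonoidAlgebra K (FreeMonoid A) →ₐ[K] MonoidAlgebra K c.Quotient :=
  MonoidAlgebra.mapDomainAlgHom K K c.mk'

/-- A congruence `≡` on `A*` is `K`-shuffle compatible if the unshuffle coproduct descends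
to the quotient, i.e. `u ≡ v` implies `(nat ⊗ nat)(c u) = (nat ⊗ nat)(c v)`. -/
def ShuffleCompat (K : Type*) {A : Type*} [CommSemiring K] (c : Con (FreeMonoid A)) : Prop :=
  ∀ u v : FreeMonoid A, c u v →
    (Algebra.TensorProduct.map (natHom K c) (natHom K c))
        (unshuffle K A (MonoidAlgebra.of K (FreeMonoid A) u))
      = (Algebra.TensorProduct.map (natHom K c) (natHom K c))
        (unshuffle K A (MonoidAlgebra.of K (FreeMonoid A) v))

/-! In the quotient, a letter `b ≡ 1` has coproduct `[b] ⊗ 1 + 1 ⊗ [b] = 1 ⊗ 1 + 1 ⊗ 1`, which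
equals `c(1) = 1 ⊗ 1` when `K` is additively idempotent. Conversely, applying the counit `ε ⊗ ε`
to `c(b) = c(1)` yields `1 + 1 = 1` in `K`. -/

section

variable (K : Type*) [CommSemiring K] {A : Type*} (c : Con (FreeMonoid A))

noncomputable def quotientUnshuffle :
    FreeMonoid A →* MonoidAlgebra K c.Quotient ⊗[K] MonoidAlgebra K c.Quotient :=
  ((Algebra.TensorProduct.map (natHom K c) (natHom K c)).toMonoidHom.comp
    (unshuffle K A).toMonoidHom).comp (MonoidAlgebra.of K (FreeMonoid A))

theorem quotientUnshuffle_apply (u : FreeMonoid A) :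
    quotientUnshuffle K c u = Algebra.TensorProduct.map (natHom K c) (natHom K c)
      (unshuffle K A (MonoidAlgebra.of K (FreeMonoid A) u)) :=
  rfl

theorem shuffleCompat_iff_le_ker :
    ShuffleCompat K c ↔ c ≤ Con.ker (quotientUnshuffle K c) :=
  forall₃_congr fun _ _ _ => by rw [Con.ker_rel, quotientUnshuffle_apply, quotientUnshuffle_apply]

theorem natHom_of (g : FreeMonoid A) :
    natHom K c (MonoidAlgebra.of K (FreeMonoid A) g) = MonoidAlgebra.of K c.Quotient (c.mk' g) := by
  simp [natHom, MonoidAlgebra.mapDomainAlgHom]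

theorem quotientUnshuffle_of (b : A) :
    quotientUnshuffle K c (FreeMonoid.of b) =
      MonoidAlgebra.of K c.Quotient (c.mk' (FreeMonoid.of b)) ⊗ₜ[K] 1
        + 1 ⊗ₜ[K] MonoidAlgebra.of K c.Quotient (c.mk' (FreeMonoid.of b)) := by
  rw [quotientUnshuffle_apply, unshuffle, MonoidAlgebra.lift_of, FreeMonoid.lift_eval_of, map_add,
    Algebra.TensorProduct.map_tmul, Algebra.TensorProduct.map_tmul, natHom_of, map_one]

theorem quotientUnshuffle_of_eq_one_add_one {b : A} (hb : c (FreeMonoid.of b) 1) :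
    quotientUnshuffle K c (FreeMonoid.of b) = 1 + 1 := by
  have hmk : c.mk' (FreeMonoid.of b) = 1 := by
    rw [← map_one c.mk', ← Con.ker_rel, Con.mk'_ker]
    exact hb
  rw [quotientUnshuffle_of, hmk, map_one, Algebra.TensorProduct.one_def]

noncomputable def quotientCounit :
    MonoidAlgebra K c.Quotient ⊗[K] MonoidAlgebra K c.Quotient →ₐ[K] K :=
  Algebra.TensorProduct.productMap (MonoidAlgebra.lift K K c.Quotient 1)
    (MonoidAlgebra.lift K K c.Quotient 1)

theorem one_add_one_eq_one_of_shuffleCompat {b : A} (hb : c (FreeMonoid.of b) 1)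
    (h : ShuffleCompat K c) : (1 : K) + 1 = 1 := by
  have hψ : quotientUnshuffle K c (FreeMonoid.of b) = quotientUnshuffle K c 1 :=
    (Con.ker_rel _).1 ((shuffleCompat_iff_le_ker K c).1 h hb)
  rw [quotientUnshuffle_of_eq_one_add_one K c hb, map_one] at hψ
  have hε := congrArg (quotientCounit K c) hψ
  rwa [map_add, map_one] at hε

theorem shuffleCompat_conGen_erasing_of_one_add_one (b : A) (hK : (1 : K) + 1 = 1) :
    ShuffleCompat K (conGen fun x y : FreeMonoid A => x = FreeMonoid.of b ∧ y = 1) := by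
  set c := conGen fun x y : FreeMonoid A => x = FreeMonoid.of b ∧ y = 1
  have hb : c (FreeMonoid.of b) 1 := ConGen.Rel.of _ _ ⟨rfl, rfl⟩
  have add_self : ∀ x : MonoidAlgebra K c.Quotient ⊗[K] MonoidAlgebra K c.Quotient, x + x = x :=
    fun x => by rw [← one_smul K x, ← add_smul, hK]
  rw [shuffleCompat_iff_le_ker, Con.conGen_le]
  rintro _ _ ⟨rfl, rfl⟩
  rw [Con.ker_rel, quotientUnshuffle_of_eq_one_add_one K c hb, add_self, map_one]

end

/-- the congruence generated by the erasing relation `a ≡ 1` is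
`𝔹`-shuffle compatible over the boolean semiring, but is not `K`-shuffle compatible
over any semiring `K` in which `1 + 1 ≠ 1`. -/
theorem erasing_relation_boolean_compatible_only {A : Type*} (a : A)
    {K : Type*} [CommSemiring K] (hK : (1 : K) + 1 ≠ 1) :
    ShuffleCompat Bool
        (conGen (fun x y : FreeMonoid A => x = FreeMonoid.of a ∧ y = 1)) ∧
      ¬ ShuffleCompat K
        (conGen (fun x y : FreeMonoid A => x = FreeMonoid.of a ∧ y = 1)) :=
  ⟨shuffleCompat_conGen_erasing_of_one_add_one Bool a rfl,
    fun h => hK (one_add_one_eq_one_of_shuffleCompat K _ (ConGen.Rel.of _ _ ⟨rfl, rfl⟩) h)⟩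
end
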